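/- arXiv:1509.04827 — 2 statements merged into one kernel-verified Lean document; each statement's English description precedes it below -/
import Mathlib

section
/- For every τ > 0, p(τ) ≤ c(τ)·h(τ), i.e. p(τ) ≤ √(−p'(τ)) · ∫_τ^∞ √(−p'(ξ)) dξ. Equivalently, p(τ)/c(τ) ≤ h(τ) for all τ > 0. -/
open Real MeasureTheory Set Filter

/-- For a pressure `p` with `p' < 0`, `p'' > 0`, `p → 0` at `+∞` and
`√(-p')` integrable at infinity, one has `p ≤ c·h`, i.e.
`p τ ≤ √(-p' τ) * ∫_τ^∞ √(-p' ξ) dξ`; equivalently `p/c ≤ h`. -/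
theorem pressure_le_soundspeed_mul_h (p : ℝ → ℝ)
    (hreg : ContDiffOn ℝ 2 p (Set.Ioi 0))
    (hp' : ∀ τ > (0:ℝ), deriv p τ < 0)
    (hp'' : ∀ τ > (0:ℝ), 0 < deriv (deriv p) τ)
    (hlim : Tendsto p atTop (nhds 0))
    (hint : IntegrableOn (fun ξ => Real.sqrt (-deriv p ξ)) (Set.Ici 1)) :
    ∀ τ > (0:ℝ),
      p τ ≤ Real.sqrt (-deriv p τ) * ∫ ξ in Set.Ioi τ, Real.sqrt (-deriv p ξ) ∧
      p τ / Real.sqrt (-deriv p τ) ≤ ∫ ξ in Set.Ioi τ, Real.sqrt (-deriv p ξ) := by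
  intro τ hτ
  set c : ℝ → ℝ := fun ξ => Real.sqrt (-deriv p ξ) with hc
  -- differentiability
  have hdiff : ∀ x ∈ Set.Ioi (0:ℝ), HasDerivAt p (deriv p x) x := by
    intro x hx
    exact ((hreg.differentiableOn (by norm_num)).differentiableAt
      (isOpen_Ioi.mem_nhds hx)).hasDerivAt
  have hcont' : ContinuousOn (deriv p) (Set.Ioi 0) :=
    hreg.continuousOn_deriv_of_isOpen isOpen_Ioi (by norm_num)
  -- deriv p is monotone (strictly) on Ioi 0
  have hmono : StrictMonoOn (deriv p) (Set.Ioi 0) := by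
    apply strictMonoOn_of_deriv_pos (convex_Ioi 0) hcont'
    intro x hx
    rw [interior_Ioi] at hx
    exact hp'' x hx
  -- pointwise bound
  have hkey : ∀ ξ ∈ Set.Ioi τ, -deriv p ξ ≤ c τ * c ξ := by
    intro ξ hξ
    have hξ0 : (0:ℝ) < ξ := lt_trans hτ hξ
    have h1 : -deriv p ξ ≤ -deriv p τ := by
      have := hmono.monotoneOn hτ hξ0 (le_of_lt hξ)
      linarith
    have h2 : (0:ℝ) ≤ -deriv p ξ := le_of_lt (by linarith [hp' ξ hξ0])
    calc -deriv p ξ = c ξ * c ξ := (Real.mul_self_sqrt h2).symm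
      _ ≤ c τ * c ξ := by
          exact mul_le_mul_of_nonneg_right (Real.sqrt_le_sqrt h1) (Real.sqrt_nonneg _)
  -- integrability of c on Ioi τ
  have hcint : IntegrableOn c (Set.Ioi τ) := by
    have h1 : IntegrableOn c (Set.Ioc τ 1) := by
      have : ContinuousOn c (Set.Icc τ 1) := by
        apply (Real.continuous_sqrt.comp_continuousOn (hcont'.neg.mono ?_))
        intro x hx
        exact lt_of_lt_of_le hτ hx.1
      exact (this.integrableOn_Icc).mono_set Set.Ioc_subset_Icc_self
    have h2 : IntegrableOn c (Set.Ioc τ 1 ∪ Set.Ioi 1) :=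
      h1.union (hint.mono_set Set.Ioi_subset_Ici_self)
    apply h2.mono_set
    intro x hx
    rcases le_or_gt x 1 with h | h
    · exact Or.inl ⟨hx, h⟩
    · exact Or.inr h
  -- integrability of -deriv p on Ioi τ
  have hdint : IntegrableOn (fun ξ => -deriv p ξ) (Set.Ioi τ) := by
    apply Integrable.mono' ((hcint.const_mul (c τ)))
    · exact ((hcont'.neg.mono (fun x hx => lt_trans hτ hx)).aestronglyMeasurable
        measurableSet_Ioi)
    · filter_upwards [ae_restrict_mem measurableSet_Ioi] with x hx
      have hx0 : (0:ℝ) < x := lt_trans hτ hx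
      rw [Real.norm_of_nonneg (le_of_lt (by linarith [hp' x hx0]))]
      exact hkey x hx
  -- FTC on (τ, ∞)
  have hftc : ∫ ξ in Set.Ioi τ, deriv p ξ = 0 - p τ := by
    apply integral_Ioi_of_hasDerivAt_of_tendsto' (f' := deriv p) ?_ ?_ hlim
    · intro x hx
      exact hdiff x (lt_of_lt_of_le hτ hx)
    · exact integrable_neg_iff.1 hdint
  have hptau : ∫ ξ in Set.Ioi τ, -deriv p ξ = p τ := by
    rw [MeasureTheory.integral_neg, hftc]; ring
  -- main chain
  have hmain : p τ ≤ c τ * ∫ ξ in Set.Ioi τ, c ξ := by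
    calc p τ = ∫ ξ in Set.Ioi τ, -deriv p ξ := hptau.symm
      _ ≤ ∫ ξ in Set.Ioi τ, c τ * c ξ := by
          apply MeasureTheory.setIntegral_mono_on hdint (hcint.const_mul (c τ))
            measurableSet_Ioi hkey
      _ = c τ * ∫ ξ in Set.Ioi τ, c ξ := by
          rw [MeasureTheory.integral_const_mul]
  have hcpos : 0 < c τ := Real.sqrt_pos.mpr (by linarith [hp' τ hτ])
  exact ⟨hmain, (div_le_iff₀ hcpos).mpr (by rw [mul_comm] at hmain; exact hmain)⟩
end

section
/- Assume in addition that there is a constant k > 1 such that 2(k−1)(p'(τ))² ≥ k p(τ) p''(τ) for all τ > 0. Then c(τ)·h(τ) ≤ k·p(τ) for every τ > 0, i.e. √(−p'(τ)) · ∫_τ^∞ √(−p'(ξ)) dξ ≤ k p(τ). Combined with the lower bound p ≤ c h, this gives (1/(2k)) c (s − r) ≤ p ≤ (1/2) c (s − r) whenever s − r = 2h. -/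
open Real MeasureTheory Set Filter

/-!
Write `c = √(-p')` and `b = 1/k`. The hypothesis on `p''` says exactly that `(-p') p^(2(b-1))`
is nondecreasing, i.e. `c(τ) p(τ)^(b-1) ≤ c(ξ) p(ξ)^(b-1)` for `τ ≤ ξ`. Hence
`c(ξ) = -p'(ξ) / c(ξ) ≤ -p'(ξ) p(ξ)^(b-1) / (c(τ) p(τ)^(b-1))`, and the right side integrates
explicitly over `(τ, ∞)` because `-p' p^(b-1) = -(p^b / b)'`; this gives both the integrability
of `c` and `c(τ) h(τ) ≤ p(τ) / b = k p(τ)`. The lower bound `p ≤ c h` comes from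
`p(τ) = ∫_τ^∞ (-p')` and `-p'(ξ) ≤ c(τ) c(ξ)`, as `c` is nonincreasing.
-/

lemma pos_of_strictAntiOn_Ioi_of_tendsto_zero {f : ℝ → ℝ} {a x : ℝ} (hf : StrictAntiOn f (Ioi a))
    (hlim : Tendsto f atTop (nhds 0)) (hx : a < x) : 0 < f x := by
  have hx1 : a < x + 1 := by linarith
  have hnonneg : 0 ≤ f (x + 1) := le_of_tendsto hlim <| by
    filter_upwards [eventually_ge_atTop (x + 1)] with y hy
    exact hf.antitoneOn hx1 (hx1.trans_le hy) hy
  exact hnonneg.trans_lt (hf hx hx1 (lt_add_one x))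

lemma hasDerivAt_deriv_of_contDiffOn_two {f : ℝ → ℝ} {s : Set ℝ} (hs : IsOpen s)
    (hf : ContDiffOn ℝ 2 f s) {x : ℝ} (hx : x ∈ s) :
    HasDerivAt f (deriv f x) x ∧ HasDerivAt (deriv f) (deriv (deriv f) x) x := by
  have hf' : ContDiffOn ℝ 1 (deriv f) s := hf.deriv_of_isOpen hs (by norm_num)
  exact ⟨((hf.differentiableOn two_ne_zero).differentiableAt (hs.mem_nhds hx)).hasDerivAt,
    ((hf'.differentiableOn one_ne_zero).differentiableAt (hs.mem_nhds hx)).hasDerivAt⟩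

section Pressure

variable {p p' p'' : ℝ → ℝ} {b τ : ℝ}

lemma integrableOn_and_integral_Ioi_deriv_mul_rpow (hb : 0 < b)
    (hp : ∀ x ∈ Ici τ, 0 < p x) (hd : ∀ x ∈ Ici τ, HasDerivAt p (p' x) x)
    (hp' : ∀ x ∈ Ioi τ, p' x ≤ 0) (hlim : Tendsto p atTop (nhds 0)) :
    IntegrableOn (fun x => p' x * p x ^ (b - 1)) (Ioi τ) ∧
      ∫ x in Ioi τ, p' x * p x ^ (b - 1) = -(p τ ^ b / b) := by
  have hderiv : ∀ x ∈ Ici τ, HasDerivAt (fun y => p y ^ b / b) (p' x * p x ^ (b - 1)) x := by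
    intro x hx
    exact (((hd x hx).rpow_const (Or.inl (hp x hx).ne')).div_const b).congr_deriv
      (by field_simp)
  have hnonpos : ∀ x ∈ Ioi τ, p' x * p x ^ (b - 1) ≤ 0 := fun x hx =>
    mul_nonpos_of_nonpos_of_nonneg (hp' x hx) (rpow_nonneg (hp x (Ioi_subset_Ici_self hx)).le _)
  have hlim' : Tendsto (fun y => p y ^ b / b) atTop (nhds 0) := by
    simpa [zero_rpow hb.ne'] using
      ((continuousAt_rpow_const 0 b (Or.inr hb.le)).tendsto.comp hlim).div_const b
  refine ⟨integrableOn_Ioi_deriv_of_nonpos' hderiv hnonpos hlim', ?_⟩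
  rw [integral_Ioi_of_hasDerivAt_of_nonpos' hderiv hnonpos hlim', zero_sub]

lemma monotoneOn_neg_mul_rpow {s : Set ℝ} (hs : Convex ℝ s) {e : ℝ}
    (hp : ∀ x ∈ s, 0 < p x) (hd : ∀ x ∈ s, HasDerivAt p (p' x) x)
    (hd2 : ∀ x ∈ s, HasDerivAt p' (p'' x) x) (hineq : ∀ x ∈ s, p x * p'' x ≤ -e * p' x ^ 2) :
    MonotoneOn (fun x => -p' x * p x ^ e) s := by
  have hderiv : ∀ x ∈ s, HasDerivAt (fun x => -p' x * p x ^ e)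
      (-p'' x * p x ^ e + -p' x * (p' x * e * p x ^ (e - 1))) x := fun x hx =>
    (hd2 x hx).neg.mul ((hd x hx).rpow_const (Or.inl (hp x hx).ne'))
  refine monotoneOn_of_deriv_nonneg hs (HasDerivAt.continuousOn hderiv)
    (fun x hx => (hderiv x (interior_subset hx)).differentiableAt.differentiableWithinAt)
    fun x hx => ?_
  have hx := interior_subset hx
  rw [(hderiv x hx).deriv, rpow_sub_one (hp x hx).ne']
  have hpe : 0 ≤ p x ^ e / p x := div_nonneg (rpow_nonneg (hp x hx).le _) (hp x hx).le
  have key : -p'' x * p x ^ e + -p' x * (p' x * e * (p x ^ e / p x))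
      = p x ^ e / p x * (-e * p' x ^ 2 - p x * p'' x) := by
    field_simp [(hp x hx).ne']
    ring
  rw [key]
  exact mul_nonneg hpe (sub_nonneg.2 (hineq x hx))

lemma sqrt_neg_deriv_le_mul_neg_deriv_mul_rpow (hp : ∀ x ∈ Ioi 0, 0 < p x)
    (hd : ∀ x ∈ Ioi 0, HasDerivAt p (p' x) x) (hd2 : ∀ x ∈ Ioi 0, HasDerivAt p' (p'' x) x)
    (hp' : ∀ x ∈ Ioi 0, p' x < 0)
    (hineq : ∀ x ∈ Ioi 0, p x * p'' x ≤ 2 * (1 - b) * p' x ^ 2) (hτ : 0 < τ) {ξ : ℝ}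
    (hξ : τ ≤ ξ) :
    √(-p' ξ) ≤ (√(-p' τ) * p τ ^ (b - 1))⁻¹ * -(p' ξ * p ξ ^ (b - 1)) := by
  have hξ0 : 0 < ξ := hτ.trans_le hξ
  have hψ : -p' τ * p τ ^ (2 * (b - 1)) ≤ -p' ξ * p ξ ^ (2 * (b - 1)) :=
    monotoneOn_neg_mul_rpow (convex_Ioi 0) hp hd hd2 (fun x hx => by linarith [hineq x hx])
      hτ hξ0 hξ
  have hsq : ∀ x ∈ Ioi (0 : ℝ), -p' x * p x ^ (2 * (b - 1)) = (√(-p' x) * p x ^ (b - 1)) ^ 2 := by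
    intro x hx
    rw [mul_pow, sq_sqrt (neg_nonneg.2 (hp' x hx).le), mul_comm 2, rpow_mul (hp x hx).le,
      rpow_two]
  have hcτ : 0 < √(-p' τ) * p τ ^ (b - 1) :=
    mul_pos (sqrt_pos.2 (neg_pos.2 (hp' τ hτ))) (rpow_pos_of_pos (hp τ hτ) _)
  have hroot : √(-p' τ) * p τ ^ (b - 1) ≤ √(-p' ξ) * p ξ ^ (b - 1) := by
    rw [hsq τ hτ, hsq ξ hξ0] at hψ
    exact (pow_le_pow_iff_left₀ hcτ.le
      (mul_nonneg (sqrt_nonneg _) (rpow_nonneg (hp ξ hξ0).le _)) two_ne_zero).1 hψ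
  rw [inv_mul_eq_div, le_div_iff₀ hcτ]
  calc √(-p' ξ) * (√(-p' τ) * p τ ^ (b - 1)) ≤ √(-p' ξ) * (√(-p' ξ) * p ξ ^ (b - 1)) := by
        gcongr
    _ = -(p' ξ * p ξ ^ (b - 1)) := by
        rw [← mul_assoc, mul_self_sqrt (neg_nonneg.2 (hp' ξ hξ0).le)]; ring

lemma integrableOn_sqrt_neg_deriv (hb : 0 < b) (hp : ∀ x ∈ Ioi 0, 0 < p x)
    (hd : ∀ x ∈ Ioi 0, HasDerivAt p (p' x) x) (hd2 : ∀ x ∈ Ioi 0, HasDerivAt p' (p'' x) x)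
    (hp' : ∀ x ∈ Ioi 0, p' x < 0)
    (hineq : ∀ x ∈ Ioi 0, p x * p'' x ≤ 2 * (1 - b) * p' x ^ 2)
    (hlim : Tendsto p atTop (nhds 0)) (hτ : 0 < τ) :
    IntegrableOn (fun x => √(-p' x)) (Ioi τ) := by
  have hF := (integrableOn_and_integral_Ioi_deriv_mul_rpow hb (fun x hx => hp x (hτ.trans_le hx))
    (fun x hx => hd x (hτ.trans_le hx)) (fun x hx => (hp' x (hτ.trans hx)).le) hlim).1
  refine (hF.neg.const_mul (√(-p' τ) * p τ ^ (b - 1))⁻¹).mono' ?_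
    (ae_restrict_of_forall_mem measurableSet_Ioi fun ξ hξ => ?_)
  · exact ((continuous_sqrt.comp_continuousOn (HasDerivAt.continuousOn hd2).neg).mono
      fun x hx => hτ.trans hx).aestronglyMeasurable measurableSet_Ioi
  · rw [norm_of_nonneg (sqrt_nonneg _)]
    exact sqrt_neg_deriv_le_mul_neg_deriv_mul_rpow hp hd hd2 hp' hineq hτ (le_of_lt hξ)

lemma sqrt_neg_deriv_mul_integral_le (hb : 0 < b) (hp : ∀ x ∈ Ioi 0, 0 < p x)
    (hd : ∀ x ∈ Ioi 0, HasDerivAt p (p' x) x) (hd2 : ∀ x ∈ Ioi 0, HasDerivAt p' (p'' x) x)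
    (hp' : ∀ x ∈ Ioi 0, p' x < 0)
    (hineq : ∀ x ∈ Ioi 0, p x * p'' x ≤ 2 * (1 - b) * p' x ^ 2)
    (hlim : Tendsto p atTop (nhds 0)) (hτ : 0 < τ) :
    √(-p' τ) * ∫ x in Ioi τ, √(-p' x) ≤ p τ / b := by
  obtain ⟨hF, hFint⟩ := integrableOn_and_integral_Ioi_deriv_mul_rpow hb
    (fun x hx => hp x (hτ.trans_le hx)) (fun x hx => hd x (hτ.trans_le hx))
    (fun x hx => (hp' x (hτ.trans hx)).le) hlim
  have hcτ : 0 < √(-p' τ) := sqrt_pos.2 (neg_pos.2 (hp' τ hτ))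
  calc √(-p' τ) * ∫ x in Ioi τ, √(-p' x)
      ≤ √(-p' τ) * ∫ x in Ioi τ, (√(-p' τ) * p τ ^ (b - 1))⁻¹ * -(p' x * p x ^ (b - 1)) := by
        refine mul_le_mul_of_nonneg_left ?_ hcτ.le
        exact integral_mono_of_nonneg
          (ae_restrict_of_forall_mem measurableSet_Ioi fun x _ => sqrt_nonneg _)
          (hF.neg.const_mul _) (ae_restrict_of_forall_mem measurableSet_Ioi fun ξ hξ =>
            sqrt_neg_deriv_le_mul_neg_deriv_mul_rpow hp hd hd2 hp' hineq hτ (le_of_lt hξ))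
    _ = √(-p' τ) * ((√(-p' τ) * p τ ^ (b - 1))⁻¹ * (p τ ^ b / b)) := by
        rw [integral_const_mul, integral_neg, hFint, neg_neg]
    _ = p τ / b := by
        rw [rpow_sub_one (hp τ hτ).ne']
        field_simp [(rpow_pos_of_pos (hp τ hτ) b).ne']

lemma le_sqrt_neg_deriv_mul_integral
    (hd : ∀ x ∈ Ici τ, HasDerivAt p (p' x) x) (hp' : ∀ x ∈ Ioi τ, p' x ≤ 0)
    (hmono : MonotoneOn p' (Ici τ)) (hlim : Tendsto p atTop (nhds 0))
    (hint : IntegrableOn (fun x => √(-p' x)) (Ioi τ)) :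
    p τ ≤ √(-p' τ) * ∫ x in Ioi τ, √(-p' x) := by
  have hle : ∀ x ∈ Ioi τ, -p' x ≤ √(-p' τ) * √(-p' x) := by
    intro x hx
    have hx' : p' τ ≤ p' x := hmono self_mem_Ici (Ioi_subset_Ici_self hx) (le_of_lt hx)
    calc -p' x = √(-p' x) * √(-p' x) := (mul_self_sqrt (by linarith [hp' x hx])).symm
      _ ≤ √(-p' τ) * √(-p' x) := by gcongr
  calc p τ = ∫ x in Ioi τ, -p' x := by
        rw [integral_neg, integral_Ioi_of_hasDerivAt_of_nonpos' hd hp' hlim, zero_sub, neg_neg]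
    _ ≤ ∫ x in Ioi τ, √(-p' τ) * √(-p' x) :=
        integral_mono_of_nonneg
          (ae_restrict_of_forall_mem measurableSet_Ioi fun x hx => by simpa using hp' x hx)
          (hint.const_mul _) (ae_restrict_of_forall_mem measurableSet_Ioi hle)
    _ = √(-p' τ) * ∫ x in Ioi τ, √(-p' x) := integral_const_mul _ _

end Pressure

theorem soundspeed_mul_h_le_k_pressure_general (p : ℝ → ℝ) (k : ℝ) (hk : 1 < k)
    (hreg : ContDiffOn ℝ 2 p (Set.Ioi 0))
    (hp' : ∀ τ > (0:ℝ), deriv p τ < 0)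
    (hp'' : ∀ τ > (0:ℝ), 0 < deriv (deriv p) τ)
    (hlim : Tendsto p atTop (nhds 0))
    (hkineq : ∀ τ > (0:ℝ), k * (p τ * deriv (deriv p) τ) ≤ 2 * (k - 1) * (deriv p τ) ^ 2) :
    ∀ τ > (0:ℝ),
      Real.sqrt (-deriv p τ) * (∫ ξ in Set.Ioi τ, Real.sqrt (-deriv p ξ)) ≤ k * p τ ∧
      ∀ s r : ℝ, s - r = 2 * ∫ ξ in Set.Ioi τ, Real.sqrt (-deriv p ξ) →
        (1 / (2 * k)) * (Real.sqrt (-deriv p τ) * (s - r)) ≤ p τ ∧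
        p τ ≤ (1 / 2) * (Real.sqrt (-deriv p τ) * (s - r)) := by
  intro τ hτ
  have hk0 : 0 < k := zero_lt_one.trans hk
  have hd : ∀ x ∈ Ioi (0:ℝ), HasDerivAt p (deriv p x) x := fun x hx =>
    (hasDerivAt_deriv_of_contDiffOn_two isOpen_Ioi hreg hx).1
  have hd2 : ∀ x ∈ Ioi (0:ℝ), HasDerivAt (deriv p) (deriv (deriv p) x) x := fun x hx =>
    (hasDerivAt_deriv_of_contDiffOn_two isOpen_Ioi hreg hx).2
  have hpos : ∀ x ∈ Ioi (0:ℝ), 0 < p x := fun x hx =>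
    pos_of_strictAntiOn_Ioi_of_tendsto_zero (strictAntiOn_of_deriv_neg (convex_Ioi 0)
      (HasDerivAt.continuousOn hd) (by rwa [interior_Ioi])) hlim hx
  have hineq : ∀ x ∈ Ioi (0:ℝ), p x * deriv (deriv p) x ≤ 2 * (1 - k⁻¹) * deriv p x ^ 2 := by
    intro x hx
    rw [← mul_le_mul_iff_of_pos_left hk0]
    exact (hkineq x hx).trans_eq (by field_simp)
  have hmono : MonotoneOn (deriv p) (Ici τ) :=
    (strictMonoOn_of_deriv_pos (convex_Ioi 0) (HasDerivAt.continuousOn hd2)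
      (by rwa [interior_Ioi])).monotoneOn.mono (Ici_subset_Ioi.2 hτ)
  have hupper := sqrt_neg_deriv_mul_integral_le (inv_pos.2 hk0) hpos hd hd2 hp' hineq hlim hτ
  have hlower := le_sqrt_neg_deriv_mul_integral (fun x hx => hd x (hτ.trans_le hx))
    (fun x hx => (hp' x (hτ.trans hx)).le) hmono hlim
    (integrableOn_sqrt_neg_deriv (inv_pos.2 hk0) hpos hd hd2 hp' hineq hlim hτ)
  rw [div_inv_eq_mul, mul_comm (p τ)] at hupper
  refine ⟨hupper, fun s r hsr => ⟨?_, ?_⟩⟩ <;> rw [hsr]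
  · rw [div_mul_eq_mul_div, one_mul, div_le_iff₀ (by positivity)]
    linarith
  · linarith

/-- under the additional condition `2(k−1)(p')² ≥ k p p''` with `k > 1`,
one has `c·h ≤ k·p`, i.e. `√(-p' τ) * ∫_τ^∞ √(-p' ξ) dξ ≤ k p τ`; combined with the
lower bound `p ≤ c h` this yields `(1/(2k)) c (s−r) ≤ p ≤ (1/2) c (s−r)` whenever
`s − r = 2h`. -/
theorem soundspeed_mul_h_le_k_pressure (p : ℝ → ℝ) (k : ℝ) (hk : 1 < k)
    (hreg : ContDiffOn ℝ 2 p (Set.Ioi 0))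
    (hp' : ∀ τ > (0:ℝ), deriv p τ < 0)
    (hp'' : ∀ τ > (0:ℝ), 0 < deriv (deriv p) τ)
    (hlim : Tendsto p atTop (nhds 0))
    (hint : IntegrableOn (fun ξ => Real.sqrt (-deriv p ξ)) (Set.Ici 1))
    (hkineq : ∀ τ > (0:ℝ), k * (p τ * deriv (deriv p) τ) ≤ 2 * (k - 1) * (deriv p τ) ^ 2) :
    ∀ τ > (0:ℝ),
      Real.sqrt (-deriv p τ) * (∫ ξ in Set.Ioi τ, Real.sqrt (-deriv p ξ)) ≤ k * p τ ∧
      ∀ s r : ℝ, s - r = 2 * ∫ ξ in Set.Ioi τ, Real.sqrt (-deriv p ξ) →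
        (1 / (2 * k)) * (Real.sqrt (-deriv p τ) * (s - r)) ≤ p τ ∧
        p τ ≤ (1 / 2) * (Real.sqrt (-deriv p τ) * (s - r)) :=
  soundspeed_mul_h_le_k_pressure_general p k hk hreg hp' hp'' hlim hkineq
end
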